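/- arXiv:1906.12023 — 6 statements merged into one kernel-verified Lean document; each statement's English description precedes it below -/
import Mathlib

section
/- For every integer n and every complex number z with Re(z) > 0, the Abramowitz function J_n has complex derivative −J_{n−1}(z) at z; that is, the function w ↦ ∫_0^∞ t^n · exp(−t² − w/t) dt has derivative −∫_0^∞ t^{n−1} · exp(−t² − z/t) dt at z. -/
open MeasureTheory

/-- The Abramowitz function `J_n`. -/
noncomputable def abramowitzJ (n : ℤ) (z : ℂ) : ℂ :=
  ∫ t in Set.Ioi (0 : ℝ), ((t ^ n : ℝ) : ℂ) * Complex.exp (-(t : ℂ) ^ 2 - z / (t : ℂ))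

/-!
Differentiate under the integral sign. The `w`-derivative of `t ^ n * exp (-t ^ 2 - w / t)` is
`-t ^ (n - 1) * exp (-t ^ 2 - w / t)`, and on the half-plane `c < Re w` (with `0 < c`) its norm is
dominated by `t ^ (n - 1) * exp (-t ^ 2 - c / t)`. This real function is integrable on `(0, ∞)`
for every integer exponent: near `0` the factor `exp (-c / t) ≤ k! (t / c) ^ k` absorbs any
negative power of `t`, and near `∞` the Gaussian factor absorbs any positive one.
-/

open Real Set Topology
open scoped Nat

namespace Real

theorem exp_neg_le_factorial_div_pow {x : ℝ} (hx : 0 < x) (k : ℕ) :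
    exp (-x) ≤ k ! / x ^ k := by
  rw [exp_neg, ← inv_div]
  exact inv_anti₀ (by positivity) (pow_div_factorial_le_exp x hx.le k)

theorem zpow_mul_exp_neg_div_le {m : ℤ} {c t : ℝ} (hc : 0 < c) (ht : t ∈ Ioc 0 1) :
    t ^ m * exp (-(c / t)) ≤ (-m).toNat ! / c ^ (-m).toNat := by
  obtain ⟨ht0, ht1⟩ := ht
  set k := (-m).toNat
  have hmk : 0 ≤ m + k := by omega
  calc t ^ m * exp (-(c / t)) ≤ t ^ m * (k ! / (c / t) ^ k) := by
        gcongr; exact exp_neg_le_factorial_div_pow (by positivity) k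
    _ = k ! / c ^ k * t ^ (m + k) := by
        rw [zpow_add₀ ht0.ne', zpow_natCast, div_pow]; field_simp
    _ ≤ k ! / c ^ k := by
        refine mul_le_of_le_one_right (by positivity) ?_
        lift m + k to ℕ using hmk with j
        rw [zpow_natCast]; exact pow_le_one₀ ht0.le ht1

theorem continuousOn_zpow_mul_exp_neg_sq_sub_div (m : ℤ) (c : ℝ) :
    ContinuousOn (fun t : ℝ => t ^ m * exp (-t ^ 2 - c / t)) (Ioi 0) := by
  intro t ht
  have ht0 : t ≠ 0 := (mem_Ioi.1 ht).ne'
  have : t ≠ 0 ∨ 0 ≤ m := .inl ht0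
  exact ContinuousAt.continuousWithinAt (by fun_prop (disch := assumption))

theorem integrableOn_Ioc_zpow_mul_exp_neg_sq_sub_div (m : ℤ) {c : ℝ} (hc : 0 < c) :
    IntegrableOn (fun t : ℝ => t ^ m * exp (-t ^ 2 - c / t)) (Ioc 0 1) := by
  refine .of_bound measure_Ioc_lt_top
    (((continuousOn_zpow_mul_exp_neg_sq_sub_div m c).mono Ioc_subset_Ioi_self).aestronglyMeasurable
      measurableSet_Ioc) ((-m).toNat ! / c ^ (-m).toNat) ?_
  filter_upwards [ae_restrict_mem measurableSet_Ioc] with t ht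
  have ht0 : 0 < t := ht.1
  rw [norm_of_nonneg (by positivity)]
  calc t ^ m * exp (-t ^ 2 - c / t) ≤ t ^ m * exp (-(c / t)) := by
        gcongr; nlinarith
    _ ≤ _ := zpow_mul_exp_neg_div_le hc ht

theorem integrableOn_Ioi_one_zpow_mul_exp_neg_sq_sub_div (m : ℤ) {c : ℝ} (hc : 0 ≤ c) :
    IntegrableOn (fun t : ℝ => t ^ m * exp (-t ^ 2 - c / t)) (Ioi 1) := by
  have hgauss : IntegrableOn (fun t : ℝ => t ^ (m.toNat : ℝ) * exp (-1 * t ^ 2)) (Ioi 1) :=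
    (integrableOn_rpow_mul_exp_neg_mul_sq one_pos
      (neg_one_lt_zero.trans_le (Nat.cast_nonneg _))).mono_set (Ioi_subset_Ioi zero_le_one)
  refine hgauss.mono' (((continuousOn_zpow_mul_exp_neg_sq_sub_div m c).mono
    (Ioi_subset_Ioi zero_le_one)).aestronglyMeasurable measurableSet_Ioi) ?_
  filter_upwards [ae_restrict_mem measurableSet_Ioi] with t (ht : 1 < t)
  have ht0 : 0 < t := one_pos.trans ht
  rw [rpow_natCast, norm_of_nonneg (by positivity)]
  refine mul_le_mul ?_ (exp_le_exp.2 ?_) (by positivity) (by positivity)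
  · exact (zpow_le_zpow_right₀ ht.le (Int.self_le_toNat m)).trans_eq (zpow_natCast t _)
  · have : 0 ≤ c / t := by positivity
    linarith

theorem integrableOn_zpow_mul_exp_neg_sq_sub_div (m : ℤ) {c : ℝ} (hc : 0 < c) :
    IntegrableOn (fun t : ℝ => t ^ m * exp (-t ^ 2 - c / t)) (Ioi 0) := by
  rw [← Ioc_union_Ioi_eq_Ioi zero_le_one]
  exact (integrableOn_Ioc_zpow_mul_exp_neg_sq_sub_div m hc).union
    (integrableOn_Ioi_one_zpow_mul_exp_neg_sq_sub_div m hc.le)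

end Real

noncomputable def abramowitzIntegrand (n : ℤ) (w : ℂ) (t : ℝ) : ℂ :=
  ((t ^ n : ℝ) : ℂ) * Complex.exp (-(t : ℂ) ^ 2 - w / (t : ℂ))

theorem norm_abramowitzIntegrand (m : ℤ) (w : ℂ) {t : ℝ} (ht : 0 < t) :
    ‖abramowitzIntegrand m w t‖ = t ^ m * exp (-t ^ 2 - w.re / t) := by
  rw [abramowitzIntegrand, norm_mul, Complex.norm_exp, Complex.norm_real,
    norm_of_nonneg (zpow_nonneg ht.le m)]
  simp [← Complex.ofReal_pow]

theorem norm_abramowitzIntegrand_le (m : ℤ) {w : ℂ} {c t : ℝ} (hc : c ≤ w.re) (ht : 0 < t) :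
    ‖abramowitzIntegrand m w t‖ ≤ t ^ m * exp (-t ^ 2 - c / t) := by
  rw [norm_abramowitzIntegrand m w ht]
  gcongr

theorem continuousOn_abramowitzIntegrand (m : ℤ) (w : ℂ) :
    ContinuousOn (abramowitzIntegrand m w) (Ioi 0) := by
  intro t ht
  have ht0 : t ≠ 0 := (mem_Ioi.1 ht).ne'
  have : (t : ℂ) ≠ 0 := Complex.ofReal_ne_zero.2 ht0
  refine ContinuousAt.continuousWithinAt (.mul ?_ (by fun_prop (disch := assumption)))
  exact Complex.continuous_ofReal.continuousAt.comp (continuousAt_zpow₀ t m (.inl ht0))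

theorem integrableOn_abramowitzIntegrand (m : ℤ) {w : ℂ} (hw : 0 < w.re) :
    IntegrableOn (abramowitzIntegrand m w) (Ioi 0) := by
  refine (integrableOn_zpow_mul_exp_neg_sq_sub_div m hw).mono'
    ((continuousOn_abramowitzIntegrand m w).aestronglyMeasurable measurableSet_Ioi) ?_
  filter_upwards [ae_restrict_mem measurableSet_Ioi] with t ht
  exact (norm_abramowitzIntegrand m w ht).le

theorem hasDerivAt_abramowitzIntegrand (n : ℤ) {t : ℝ} (ht : 0 < t) (w : ℂ) :
    HasDerivAt (abramowitzIntegrand n · t) (-abramowitzIntegrand (n - 1) w t) w := by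
  have hexponent : HasDerivAt (fun w : ℂ => -(t : ℂ) ^ 2 - w / t) (-(1 / t)) w := by
    simpa using ((hasDerivAt_id w).div_const (t : ℂ)).const_sub (-(t : ℂ) ^ 2)
  refine (hexponent.cexp.const_mul ((t ^ n : ℝ) : ℂ)).congr_deriv ?_
  have : (t : ℂ) ≠ 0 := Complex.ofReal_ne_zero.2 ht.ne'
  rw [abramowitzIntegrand, zpow_sub_one₀ ht.ne']
  push_cast
  field_simp

theorem abramowitzJ_hasDerivAt (n : ℤ) (z : ℂ) (hz : 0 < z.re) :
    HasDerivAt (abramowitzJ n) (-abramowitzJ (n - 1) z) z := by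
  have hs : {w : ℂ | z.re / 2 < w.re} ∈ 𝓝 z :=
    (isOpen_lt continuous_const Complex.continuous_re).mem_nhds (half_lt_self hz)
  have hbound : ∀ᵐ t ∂volume.restrict (Ioi 0), ∀ w ∈ {w : ℂ | z.re / 2 < w.re},
      ‖-abramowitzIntegrand (n - 1) w t‖ ≤ t ^ (n - 1) * exp (-t ^ 2 - z.re / 2 / t) := by
    filter_upwards [ae_restrict_mem measurableSet_Ioi] with t ht w hw
    exact (norm_neg _).trans_le (norm_abramowitzIntegrand_le _ hw.le ht)
  have hdiff : ∀ᵐ t ∂volume.restrict (Ioi 0), ∀ w ∈ {w : ℂ | z.re / 2 < w.re},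
      HasDerivAt (abramowitzIntegrand n · t) (-abramowitzIntegrand (n - 1) w t) w := by
    filter_upwards [ae_restrict_mem measurableSet_Ioi] with t ht w _
    exact hasDerivAt_abramowitzIntegrand n ht w
  have key := hasDerivAt_integral_of_dominated_loc_of_deriv_le hs
    (.of_forall fun w =>
      (continuousOn_abramowitzIntegrand n w).aestronglyMeasurable measurableSet_Ioi)
    (integrableOn_abramowitzIntegrand n hz)
    ((continuousOn_abramowitzIntegrand (n - 1) z).neg.aestronglyMeasurable measurableSet_Ioi)
    hbound (integrableOn_zpow_mul_exp_neg_sq_sub_div (n - 1) (half_pos hz)) hdiff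
  rw [integral_neg] at key
  exact key.2
end

section
/- For every integer n, the Abramowitz function J_n, regarded as the function z ↦ ∫_0^∞ t^n · exp(−t² − z/t) dt on ℂ, satisfies the third-order ordinary differential equation z · J_n'''(z) − (n−1) · J_n''(z) + 2 · J_n(z) = 0 at every complex number z with Re(z) > 0, where J_n'' and J_n''' denote the second and third iterated complex derivatives. -/
/-!
Differentiating under the integral sign gives `J_n' = -J_{n-1}` on `Re z > 0`, hence
`J_n'' = J_{n-2}` and `J_n''' = -J_{n-3}`. Integrating
`d/dt (t^m e^{-t²-z/t}) = (m t^{m-1} - 2 t^{m+1} + z t^{m-2}) e^{-t²-z/t}` over `(0, ∞)`, where both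
boundary terms vanish, gives `m J_{m-1} - 2 J_{m+1} + z J_{m-2} = 0`; for `m = n - 1` this is the
equation. All analytic estimates come from `e^{-x} ≤ k!/x^k`, which for `0 < c ≤ Re z` bounds the
integrand by `(k!/c^k) t^{m+k} e^{-t²}` with `k` as large as needed near `t = 0`.
-/

open MeasureTheory

open Set Filter Topology
open scoped Nat

theorem Real.exp_neg_le_factorial_div_pow_s5 {x : ℝ} (hx : 0 < x) (k : ℕ) :
    Real.exp (-x) ≤ k ! / x ^ k := by
  rw [Real.exp_neg, ← inv_div]
  exact inv_anti₀ (by positivity) (Real.pow_div_factorial_le_exp _ hx.le k)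

theorem integrableOn_zpow_mul_exp_neg_sq {m : ℤ} (hm : 0 ≤ m) :
    IntegrableOn (fun t : ℝ ↦ t ^ m * Real.exp (-t ^ 2)) (Ioi 0) := by
  have h := integrableOn_rpow_mul_exp_neg_mul_sq one_pos
    (show (-1 : ℝ) < m by exact_mod_cast (by omega : (-1 : ℤ) < m))
  refine h.congr_fun (fun t _ ↦ ?_) measurableSet_Ioi
  simp [Real.rpow_intCast]

theorem integral_Ioi_of_hasDerivAt_of_tendsto_nhdsGT {E : Type*} [NormedAddCommGroup E]
    [NormedSpace ℝ E] [CompleteSpace E] {f f' : ℝ → E} {a : ℝ} {l₀ l₁ : E}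
    (hderiv : ∀ x ∈ Ioi a, HasDerivAt f (f' x) x) (hint : IntegrableOn f' (Ioi a))
    (hbot : Tendsto f (𝓝[>] a) (𝓝 l₀)) (htop : Tendsto f atTop (𝓝 l₁)) :
    ∫ x in Ioi a, f' x = l₁ - l₀ := by
  classical
  rw [← Ici_sdiff_left] at hbot
  have hcont : ContinuousWithinAt (Function.update f a l₀) (Ici a) a :=
    continuousWithinAt_update_same.mpr hbot
  have hderiv' : ∀ x ∈ Ioi a, HasDerivAt (Function.update f a l₀) (f' x) x := fun x hx ↦
    (hderiv x hx).congr_of_eventuallyEq <| by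
      filter_upwards [eventually_ne_nhds (ne_of_gt hx)] with y hy using Function.update_of_ne hy _ _
  have htop' : Tendsto (Function.update f a l₀) atTop (𝓝 l₁) := htop.congr' <| by
    filter_upwards [eventually_ne_atTop a] with x hx using (Function.update_of_ne hx _ _).symm
  simpa using integral_Ioi_of_hasDerivAt_of_tendsto hcont hderiv' hint htop'

namespace abramowitzJ

noncomputable def integrand (m : ℤ) (z : ℂ) (t : ℝ) : ℂ :=
  ((t ^ m : ℝ) : ℂ) * Complex.exp (-(t : ℂ) ^ 2 - z / (t : ℂ))

theorem eq_integral_integrand (n : ℤ) (z : ℂ) :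
    abramowitzJ n z = ∫ t in Ioi 0, integrand n z t := rfl

theorem norm_integrand (m : ℤ) (z : ℂ) {t : ℝ} (ht : 0 < t) :
    ‖integrand m z t‖ = t ^ m * Real.exp (-t ^ 2) * Real.exp (-(z.re / t)) := by
  have hre : (-(t : ℂ) ^ 2 - z / (t : ℂ)).re = -t ^ 2 + -(z.re / t) := by
    simp [Complex.div_ofReal_re, ← Complex.ofReal_pow, sub_eq_add_neg]
  rw [integrand, norm_mul, Complex.norm_real, Real.norm_of_nonneg (zpow_pos ht m).le,
    Complex.norm_exp, hre, Real.exp_add, mul_assoc]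

theorem norm_integrand_le (m : ℤ) (k : ℕ) {z : ℂ} {c t : ℝ} (hc : 0 < c) (hcz : c ≤ z.re)
    (ht : 0 < t) :
    ‖integrand m z t‖ ≤ k ! / c ^ k * (t ^ (m + k) * Real.exp (-t ^ 2)) := by
  have hexp : Real.exp (-(z.re / t)) ≤ k ! / (c / t) ^ k :=
    calc Real.exp (-(z.re / t)) ≤ Real.exp (-(c / t)) := by gcongr
      _ ≤ k ! / (c / t) ^ k := Real.exp_neg_le_factorial_div_pow_s5 (by positivity) k
  calc ‖integrand m z t‖ ≤ t ^ m * Real.exp (-t ^ 2) * (k ! / (c / t) ^ k) := by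
        rw [norm_integrand m z ht]; gcongr
    _ = k ! / c ^ k * (t ^ (m + k) * Real.exp (-t ^ 2)) := by
        rw [zpow_add₀ ht.ne', zpow_natCast, div_pow]; field_simp

theorem hasDerivAt_integrand (m : ℤ) (z : ℂ) {t : ℝ} (ht : 0 < t) :
    HasDerivAt (integrand m z)
      (m * integrand (m - 1) z t - 2 * integrand (m + 1) z t + z * integrand (m - 2) z t) t := by
  have ht' : (t : ℂ) ≠ 0 := by exact_mod_cast ht.ne'
  have hid : HasDerivAt (fun s : ℝ ↦ (s : ℂ)) 1 t := by simpa using (hasDerivAt_id t).ofReal_comp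
  have hpow : HasDerivAt (fun s : ℝ ↦ ((s ^ m : ℝ) : ℂ)) ((m * t ^ (m - 1) : ℝ) : ℂ) t :=
    (hasDerivAt_zpow m t (.inl ht.ne')).ofReal_comp
  refine (hpow.mul ((hid.pow 2).neg.sub ((hasDerivAt_const t z).div hid ht')).cexp).congr_deriv ?_
  simp only [integrand, Pi.sub_apply, Pi.neg_apply, Pi.pow_apply, Pi.div_apply,
    Complex.ofReal_mul, Complex.ofReal_zpow, Complex.ofReal_intCast,
    zpow_sub₀ ht', zpow_add₀ ht', zpow_ofNat]
  field_simp
  ring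

theorem hasDerivAt_integrand_param (m : ℤ) (w : ℂ) {t : ℝ} (ht : 0 < t) :
    HasDerivAt (integrand m · t) (-integrand (m - 1) w t) w := by
  have ht' : (t : ℂ) ≠ 0 := by exact_mod_cast ht.ne'
  refine ((((hasDerivAt_id w).div_const (t : ℂ)).const_sub (-(t : ℂ) ^ 2)).cexp.const_mul
    ((t ^ m : ℝ) : ℂ)).congr_deriv ?_
  simp only [integrand, Complex.ofReal_zpow, zpow_sub_one₀ ht', id]
  field_simp

theorem continuousOn_integrand (m : ℤ) (z : ℂ) : ContinuousOn (integrand m z) (Ioi 0) :=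
  fun _ ht ↦ (hasDerivAt_integrand m z ht).continuousAt.continuousWithinAt

theorem integrableOn_integrand (m : ℤ) {z : ℂ} (hz : 0 < z.re) :
    IntegrableOn (integrand m z) (Ioi 0) := by
  refine Integrable.mono'
    ((integrableOn_zpow_mul_exp_neg_sq (m := m + m.natAbs) (by omega)).const_mul
      (m.natAbs ! / z.re ^ m.natAbs))
    ((continuousOn_integrand m z).aestronglyMeasurable measurableSet_Ioi) ?_
  filter_upwards [ae_restrict_mem measurableSet_Ioi] with t ht
  exact norm_integrand_le m _ hz le_rfl ht

theorem tendsto_integrand_nhdsGT_zero (m : ℤ) {z : ℂ} (hz : 0 < z.re) :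
    Tendsto (integrand m z) (𝓝[>] 0) (𝓝 0) := by
  set k := m.natAbs + 1
  have hmk : 0 < m + k := by omega
  have hbound :
      Tendsto (fun t : ℝ ↦ k ! / z.re ^ k * (t ^ (m + k) * Real.exp (-t ^ 2))) (𝓝 0) (𝓝 0) := by
    have := ((continuousAt_zpow₀ (0 : ℝ) (m + k) (Or.inr hmk.le)).mul
      (Real.continuous_exp.comp (continuous_pow 2).neg).continuousAt).const_mul (k ! / z.re ^ k)
    simpa [zero_zpow _ hmk.ne'] using this.tendsto
  refine squeeze_zero_norm' ?_ (hbound.mono_left nhdsWithin_le_nhds)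
  filter_upwards [self_mem_nhdsWithin] with t ht using norm_integrand_le m k hz le_rfl ht

end abramowitzJ

open abramowitzJ

theorem abramowitzJ_recurrence (m : ℤ) {z : ℂ} (hz : 0 < z.re) :
    m * abramowitzJ (m - 1) z - 2 * abramowitzJ (m + 1) z + z * abramowitzJ (m - 2) z = 0 := by
  have hint : ∀ j : ℤ, ∀ c : ℂ, IntegrableOn (fun t ↦ c * integrand j z t) (Ioi 0) :=
    fun j c ↦ (integrableOn_integrand j hz).const_mul c
  have hderiv_int : IntegrableOn (fun t ↦
      m * integrand (m - 1) z t - 2 * integrand (m + 1) z t + z * integrand (m - 2) z t) (Ioi 0) :=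
    ((hint _ _).sub (hint _ _)).add (hint _ _)
  have hderiv := fun t (ht : t ∈ Ioi (0 : ℝ)) ↦ hasDerivAt_integrand m z ht
  have hftc := integral_Ioi_of_hasDerivAt_of_tendsto_nhdsGT hderiv hderiv_int
    (tendsto_integrand_nhdsGT_zero m hz)
    (tendsto_zero_of_hasDerivAt_of_integrableOn_Ioi hderiv hderiv_int (integrableOn_integrand m hz))
  rw [integral_add ?_ (hint _ _), integral_sub (hint _ _) (hint _ _),
    integral_const_mul, integral_const_mul, integral_const_mul, sub_self] at hftc
  · simpa only [eq_integral_integrand] using hftc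
  · exact (hint _ _).sub (hint _ _)

theorem hasDerivAt_abramowitzJ (n : ℤ) {z : ℂ} (hz : 0 < z.re) :
    HasDerivAt (abramowitzJ n) (-abramowitzJ (n - 1) z) z := by
  set c := z.re / 2
  have hc : 0 < c := half_pos hz
  have hmeas : ∀ (m : ℤ) (w : ℂ), AEStronglyMeasurable (integrand m w) (volume.restrict (Ioi 0)) :=
    fun m w ↦ (continuousOn_integrand m w).aestronglyMeasurable measurableSet_Ioi
  have hderiv := hasDerivAt_integral_of_dominated_loc_of_deriv_le
    (F' := fun w t ↦ -integrand (n - 1) w t)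
    ((Complex.isOpen_re_gt c).mem_nhds (half_lt_self hz)) (.of_forall fun w ↦ hmeas n w)
    (integrableOn_integrand n hz) (hmeas (n - 1) z).neg ?_
    ((integrableOn_zpow_mul_exp_neg_sq (m := n - 1 + (n - 1).natAbs) (by omega)).const_mul
      ((n - 1).natAbs ! / c ^ (n - 1).natAbs)) ?_
  · have h := hderiv.2
    rw [integral_neg] at h
    exact h
  · filter_upwards [ae_restrict_mem measurableSet_Ioi] with t ht w hw
    rw [norm_neg]
    exact norm_integrand_le (n - 1) _ hc (le_of_lt hw) ht
  · filter_upwards [ae_restrict_mem measurableSet_Ioi] with t ht w _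
    exact hasDerivAt_integrand_param n w ht

theorem deriv_abramowitzJ (n : ℤ) {z : ℂ} (hz : 0 < z.re) :
    deriv (abramowitzJ n) z = -abramowitzJ (n - 1) z :=
  (hasDerivAt_abramowitzJ n hz).deriv

theorem deriv_deriv_abramowitzJ (n : ℤ) {z : ℂ} (hz : 0 < z.re) :
    deriv (deriv (abramowitzJ n)) z = abramowitzJ (n - 2) z := by
  have hEq : EqOn (deriv (abramowitzJ n)) (-abramowitzJ (n - 1)) {w | 0 < w.re} :=
    fun w hw ↦ deriv_abramowitzJ n hw
  rw [hEq.deriv (Complex.isOpen_re_gt 0) hz, deriv.neg, deriv_abramowitzJ (n - 1) hz, neg_neg,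
    sub_sub, one_add_one_eq_two]

theorem deriv_deriv_deriv_abramowitzJ (n : ℤ) {z : ℂ} (hz : 0 < z.re) :
    deriv (deriv (deriv (abramowitzJ n))) z = -abramowitzJ (n - 3) z := by
  have hEq : EqOn (deriv (deriv (abramowitzJ n))) (abramowitzJ (n - 2)) {w | 0 < w.re} :=
    fun w hw ↦ deriv_deriv_abramowitzJ n hw
  rw [hEq.deriv (Complex.isOpen_re_gt 0) hz, deriv_abramowitzJ (n - 2) hz, sub_sub]
  norm_num

theorem abramowitzJ_ode (n : ℤ) (z : ℂ) (hz : 0 < z.re) :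
    z * deriv (deriv (deriv (abramowitzJ n))) z
      - ((n : ℂ) - 1) * deriv (deriv (abramowitzJ n)) z
      + 2 * abramowitzJ n z = 0 := by
  have h := abramowitzJ_recurrence (n - 1) hz
  rw [sub_add_cancel, sub_sub, sub_sub, one_add_one_eq_two, show (1 : ℤ) + 2 = 3 by norm_num] at h
  rw [deriv_deriv_deriv_abramowitzJ n hz, deriv_deriv_abramowitzJ n hz]
  push_cast at h
  linear_combination -h
end

section
/- Let a : ℕ → ℝ be the sequence defined by a 0 = 0, a 1 = 0, a 2 = −1, and a k = −2·a (k−2) / (k·(k−1)·(k−2)) for all k ≥ 3. Then for every k ≥ 1, a (2k−1) = 0 and a (2k) = (−1)^k · 2 / ((2k)! · (k−1)!). -/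
/-- The logarithmic coefficients `a k` in the series expansion of `2 J₁`. -/
noncomputable def abramowitzA : ℕ → ℝ
  | 0 => 0
  | 1 => 0
  | 2 => -1
  | (k + 3) =>
      -2 * abramowitzA (k + 1) / (((k : ℝ) + 3) * ((k : ℝ) + 2) * ((k : ℝ) + 1))

theorem abramowitzA_formula (k : ℕ) (hk : 1 ≤ k) :
    abramowitzA (2 * k - 1) = 0 ∧
      abramowitzA (2 * k) =
        (-1 : ℝ) ^ k * 2 / ((Nat.factorial (2 * k) : ℝ) * (Nat.factorial (k - 1) : ℝ)) := by
  induction k, hk using Nat.le_induction with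
  | base =>
    constructor
    · simp [abramowitzA]
    · norm_num [abramowitzA, Nat.factorial]
  | succ n hn ih =>
    obtain ⟨m, rfl⟩ : ∃ m, n = m + 1 := ⟨n - 1, by omega⟩
    obtain ⟨ih1, ih2⟩ := ih
    have e1 : 2 * (m + 1) - 1 = 2 * m + 1 := by omega
    have e2 : 2 * (m + 1) = 2 * m + 2 := by omega
    have e3 : 2 * (m + 1 + 1) - 1 = 2 * m + 3 := by omega
    have e4 : 2 * (m + 1 + 1) = (2 * m + 1) + 3 := by omega
    rw [e1] at ih1
    rw [e2] at ih2
    rw [show m + 1 - 1 = m from rfl] at ih2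
    rw [e3, e4]
    constructor
    · rw [show 2 * m + 3 = (2 * m) + 3 from rfl, abramowitzA,
        show (2 * m) + 1 = 2 * m + 1 from rfl, ih1]
      simp
    · have f1n : (2 * m + 1 + 3).factorial = (2 * m + 4) * ((2 * m + 3) * (2 * m + 2).factorial) := by
        rw [show 2 * m + 1 + 3 = (2 * m + 3) + 1 from rfl, Nat.factorial_succ,
          show 2 * m + 3 = (2 * m + 2) + 1 from rfl, Nat.factorial_succ]
      have f2n : (m + 1 + 1 - 1).factorial = (m + 1) * m.factorial := by
        rw [show m + 1 + 1 - 1 = m + 1 from rfl, Nat.factorial_succ]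
      rw [abramowitzA, show (2 * m + 1) + 1 = 2 * m + 2 from rfl, ih2, f1n, f2n]
      have hA : (((2 * m + 2).factorial : ℕ) : ℝ) ≠ 0 := by positivity
      have hB : ((m.factorial : ℕ) : ℝ) ≠ 0 := by positivity
      push_cast
      set A := ((2 * m + 2).factorial : ℝ)
      set B := (m.factorial : ℝ)
      have hm1 : (m : ℝ) * 2 + 4 ≠ 0 := by positivity
      have hm2 : (m : ℝ) * 2 + 3 ≠ 0 := by positivity
      have hm3 : (m : ℝ) * 2 + 2 ≠ 0 := by positivity
      field_simp
      ring
end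

section
/- Let a, b : ℕ → ℝ be the sequences defined by a 0 = 0, a 1 = 0, a 2 = −1, a k = −2·a (k−2) / (k·(k−1)·(k−2)) for k ≥ 3, and b 0 = 1, b 1 = −√π, b 2 = 3·(1−γ)/2 where γ is the Euler–Mascheroni constant, b k = −(2·b (k−2) + (3k² − 6k + 2)·a k) / (k·(k−1)·(k−2)) for k ≥ 3. Then for every k ≥ 1, b (2k+1) = (−2)^k · (−√π) / ((2k+1)! · (2k−1)!!), where (2k−1)!! denotes the double factorial of 2k−1. -/
/-- The coefficients `b k` in the series expansion of `2 J₁`. -/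
noncomputable def abramowitzB : ℕ → ℝ
  | 0 => 1
  | 1 => -Real.sqrt Real.pi
  | 2 => 3 * (1 - Real.eulerMascheroniConstant) / 2
  | (k + 3) =>
      -(2 * abramowitzB (k + 1)
          + (3 * ((k : ℝ) + 3) ^ 2 - 6 * ((k : ℝ) + 3) + 2) * abramowitzA (k + 3))
        / (((k : ℝ) + 3) * ((k : ℝ) + 2) * ((k : ℝ) + 1))

open scoped Nat

/-! Since `a` vanishes at odd indices, the recursion for `b` at odd indices collapses to
`b (2k+3) = -2 b (2k+1) / ((2k+3)(2k+2)(2k+1))`, which telescopes to the closed form: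
the three new factors are exactly those added to `(2k+1)!` and `(2k-1)!!`. -/

lemma abramowitzA_two_mul_add_one (k : ℕ) : abramowitzA (2 * k + 1) = 0 := by
  induction k with
  | zero => rfl
  | succ k ih =>
    rw [show 2 * (k + 1) + 1 = 2 * k + 3 by ring, abramowitzA, ih]
    simp

lemma abramowitzB_two_mul_add_three (k : ℕ) :
    abramowitzB (2 * k + 3) =
      -2 * abramowitzB (2 * k + 1) / ((2 * k + 3) * (2 * k + 2) * (2 * k + 1)) := by
  rw [abramowitzB, show 2 * k + 3 = 2 * (k + 1) + 1 by ring, abramowitzA_two_mul_add_one]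
  push_cast
  ring

lemma Nat.doubleFactorial_two_mul_add_one_eq (k : ℕ) :
    (2 * k + 1)‼ = (2 * k + 1) * (2 * k - 1)‼ := by
  cases k with
  | zero => rfl
  | succ k => rw [show 2 * (k + 1) + 1 = 2 * k + 1 + 2 by ring, Nat.doubleFactorial_add_two]; rfl

-- At `k = 0` the truncated `2 * 0 - 1 = 0` gives `0‼ = 1`, the intended `(-1)!!`.
lemma eq_of_succ_eq_neg_two_mul_div {u : ℕ → ℝ}
    (hu : ∀ k, u (k + 1) = -2 * u k / ((2 * k + 3) * (2 * k + 2) * (2 * k + 1))) (k : ℕ) :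
    u k = (-2) ^ k * u 0 / (((2 * k + 1)! : ℕ) * ((2 * k - 1)‼ : ℕ)) := by
  induction k with
  | zero => simp
  | succ k ih =>
    have hfact : ((2 * (k + 1) + 1)! : ℝ) = (2 * k + 3) * (2 * k + 2) * (2 * k + 1)! := by
      rw [show 2 * (k + 1) + 1 = 2 * k + 1 + 1 + 1 by ring, Nat.factorial_succ,
        Nat.factorial_succ]
      push_cast
      ring
    have hdfact : ((2 * (k + 1) - 1)‼ : ℝ) = (2 * k + 1) * (2 * k - 1)‼ := by
      rw [show 2 * (k + 1) - 1 = 2 * k + 1 by omega, Nat.doubleFactorial_two_mul_add_one_eq]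
      push_cast
      ring
    rw [hu, ih, hfact, hdfact]
    have : ((2 * k + 1)! : ℝ) ≠ 0 := by positivity
    have : ((2 * k - 1)‼ : ℝ) ≠ 0 := by exact_mod_cast (Nat.doubleFactorial_pos _).ne'
    field_simp
    ring

theorem abramowitzB_odd_formula_general (k : ℕ) :
    abramowitzB (2 * k + 1) =
      (-2 : ℝ) ^ k * (-Real.sqrt Real.pi)
        / ((Nat.factorial (2 * k + 1) : ℝ) * (Nat.doubleFactorial (2 * k - 1) : ℝ)) :=
  eq_of_succ_eq_neg_two_mul_div (u := fun k ↦ abramowitzB (2 * k + 1))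
    abramowitzB_two_mul_add_three k |>.trans <| by rw [abramowitzB]

theorem abramowitzB_odd_formula (k : ℕ) (hk : 1 ≤ k) :
    abramowitzB (2 * k + 1) =
      (-2 : ℝ) ^ k * (-Real.sqrt Real.pi)
        / ((Nat.factorial (2 * k + 1) : ℝ) * (Nat.doubleFactorial (2 * k - 1) : ℝ)) :=
  abramowitzB_odd_formula_general k
end

section
/- Let a : ℕ → ℝ be the sequence defined by a 0 = 0, a 1 = 0, a 2 = −1, and a k = −2·a (k−2) / (k·(k−1)·(k−2)) for all k ≥ 3. Then for every k ≥ 2, |a (2k)| < 1 / (2^k · ((k−1)!)³). -/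
/-! Unrolling the recurrence `a (2k+2) = -a (2k) / (2k (k+1) (2k+1))` gives the even
coefficients in closed form, `a (2k) = (-1)^k / (k! (2k-1)!)`. The claimed bound then becomes
`2^k ((k-1)!)^3 < k! (2k-1)!`, which holds at `k = 2` (`4 < 12`) and propagates because the
right side gains the factor `2k (k+1) (2k+1)` while the left side only gains `2k^3`. -/

open Nat

theorem abramowitzA_two_mul_add_two (k : ℕ) :
    abramowitzA (2 * k + 2) = (-1) ^ (k + 1) / ((k + 1)! * (2 * k + 1)! : ℝ) := by
  induction k with
  | zero => simp [abramowitzA]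
  | succ k ih =>
    rw [show 2 * (k + 1) + 2 = (2 * k + 1) + 3 by ring, abramowitzA,
      show 2 * k + 1 + 1 = 2 * k + 2 by ring, ih,
      show 2 * (k + 1) + 1 = (2 * k + 1) + 2 by ring,
      factorial_succ (k + 1), factorial_succ (2 * k + 1 + 1), factorial_succ (2 * k + 1)]
    push_cast
    field_simp
    ring

theorem two_pow_mul_factorial_pow_three_lt {n : ℕ} (hn : 1 ≤ n) :
    2 ^ (n + 1) * n ! ^ 3 < (n + 1)! * (2 * n + 1)! := by
  induction n, hn using Nat.le_induction with
  | base => decide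
  | succ n _ ih =>
    have hgain : 2 * (n + 1) ^ 3 ≤ (n + 2) * ((2 * n + 3) * (2 * n + 2)) := by
      nlinarith [Nat.zero_le (n ^ 3), Nat.zero_le (n ^ 2)]
    calc 2 ^ (n + 1 + 1) * (n + 1)! ^ 3 = 2 * (n + 1) ^ 3 * (2 ^ (n + 1) * n ! ^ 3) := by
          rw [factorial_succ]; ring
      _ < 2 * (n + 1) ^ 3 * ((n + 1)! * (2 * n + 1)!) := by gcongr
      _ ≤ (n + 2) * ((2 * n + 3) * (2 * n + 2)) * ((n + 1)! * (2 * n + 1)!) := by gcongr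
      _ = (n + 1 + 1)! * (2 * (n + 1) + 1)! := by
          rw [show 2 * (n + 1) + 1 = (2 * n + 1) + 2 by ring, factorial_succ (n + 1),
            factorial_succ (2 * n + 1 + 1), factorial_succ (2 * n + 1)]
          ring

theorem abramowitzA_bound (k : ℕ) (hk : 2 ≤ k) :
    |abramowitzA (2 * k)| < 1 / (2 ^ k * (Nat.factorial (k - 1) : ℝ) ^ 3) := by
  obtain ⟨n, rfl⟩ : ∃ n, k = n + 1 := ⟨k - 1, by omega⟩
  have hlt := two_pow_mul_factorial_pow_three_lt (n := n) (by omega)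
  rw [show 2 * (n + 1) = 2 * n + 2 by ring, abramowitzA_two_mul_add_two, abs_div, abs_pow,
    abs_neg, abs_one, one_pow, abs_of_pos (by positivity), Nat.add_sub_cancel]
  apply one_div_lt_one_div_of_lt (by positivity)
  exact_mod_cast hlt
end

section
/- Let a, b : ℕ → ℝ be the sequences defined by a 0 = 0, a 1 = 0, a 2 = −1, a k = −2·a (k−2) / (k·(k−1)·(k−2)) for k ≥ 3, and b 0 = 1, b 1 = −√π, b 2 = 3·(1−γ)/2 where γ is the Euler–Mascheroni constant, b k = −(2·b (k−2) + (3k² − 6k + 2)·a k) / (k·(k−1)·(k−2)) for k ≥ 3. Then for every k ≥ 1, |b (2k)| < 2 / ((k−1)!)³. -/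
lemma abramowitzA_rec (j : ℕ) :
    abramowitzA (2 * j + 4) =
      -2 * abramowitzA (2 * j + 2) /
        ((2 * ((j : ℝ) + 1) + 2) * (2 * ((j : ℝ) + 1) + 1) * (2 * ((j : ℝ) + 1))) := by
  have h : 2 * j + 4 = (2 * j + 1) + 3 := by ring
  rw [h, abramowitzA]
  rw [show (2 * j + 1) + 1 = 2 * j + 2 from rfl]
  push_cast
  ring_nf

lemma abramowitzB_rec (j : ℕ) :
    abramowitzB (2 * j + 4) =
      -(2 * abramowitzB (2 * j + 2)
          + (12 * ((j : ℝ) + 1) ^ 2 + 12 * ((j : ℝ) + 1) + 2) * abramowitzA (2 * j + 4))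
        / ((2 * ((j : ℝ) + 1) + 2) * (2 * ((j : ℝ) + 1) + 1) * (2 * ((j : ℝ) + 1))) := by
  have h : 2 * j + 4 = (2 * j + 1) + 3 := by rfl
  rw [h, abramowitzB]
  rw [show (2 * j + 1) + 1 = 2 * j + 2 from rfl, show (2 * j + 1) + 3 = 2 * j + 4 from rfl]
  push_cast
  ring_nf

/-- Pure real-arithmetic induction step. -/
lemma abramowitz_step (K F A B A2 B2 : ℝ) (hK : 1 ≤ K) (hF : 0 < F)
    (hA : |A| ≤ 1 / F ^ 3) (hB : |B| < 2 / F ^ 3)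
    (hA2 : A2 = -2 * A / ((2 * K + 2) * (2 * K + 1) * (2 * K)))
    (hB2 : B2 = -(2 * B + (12 * K ^ 2 + 12 * K + 2) * A2)
        / ((2 * K + 2) * (2 * K + 1) * (2 * K))) :
    |A2| ≤ 1 / (K * F) ^ 3 ∧ |B2| < 2 / (K * F) ^ 3 := by
  have hK0 : (0 : ℝ) < K := lt_of_lt_of_le one_pos hK
  set D : ℝ := (2 * K + 2) * (2 * K + 1) * (2 * K) with hDdef
  have hD : 0 < D := by
    apply mul_pos (mul_pos _ _) <;> linarith
  have hD8 : 8 * K ^ 3 ≤ D := by nlinarith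
  have hKF : (0 : ℝ) < (K * F) ^ 3 := by positivity
  have hA2abs : |A2| = 2 * |A| / D := by
    rw [hA2, abs_div, abs_of_pos hD, abs_mul]
    norm_num
  have hA2bound : |A2| ≤ 1 / (K * F) ^ 3 := by
    rw [hA2abs]
    have s1 : 2 * |A| / D ≤ (2 / F ^ 3) / (8 * K ^ 3) := by
      apply div_le_div₀ (by positivity) (by rw [show (2:ℝ)/F^3 = 2*(1/F^3) from by ring]; linarith) (by positivity) hD8
    have s2 : (2 / F ^ 3) / (8 * K ^ 3) = 1 / (4 * (K * F) ^ 3) := by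
      field_simp; ring
    have s3 : 1 / (4 * (K * F) ^ 3) ≤ 1 / (K * F) ^ 3 := by
      apply one_div_le_one_div_of_le hKF
      nlinarith
    linarith [s2 ▸ s1]
  refine ⟨hA2bound, ?_⟩
  have hc : (0 : ℝ) < 12 * K ^ 2 + 12 * K + 2 := by nlinarith
  rw [hB2, abs_div, abs_neg, abs_of_pos hD, div_lt_div_iff₀ hD hKF]
  have h1 : |2 * B + (12 * K ^ 2 + 12 * K + 2) * A2|
      ≤ 2 * |B| + (12 * K ^ 2 + 12 * K + 2) * |A2| := by
    calc |2 * B + (12 * K ^ 2 + 12 * K + 2) * A2|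
        ≤ |2 * B| + |(12 * K ^ 2 + 12 * K + 2) * A2| := abs_add_le _ _
      _ = 2 * |B| + (12 * K ^ 2 + 12 * K + 2) * |A2| := by
          rw [abs_mul, abs_mul, abs_of_pos hc]; norm_num
  have hcA : (12 * K ^ 2 + 12 * K + 2) * |A2|
      ≤ (12 * K ^ 2 + 12 * K + 2) * (1 / (K * F) ^ 3) :=
    mul_le_mul_of_nonneg_left hA2bound (le_of_lt hc)
  have h2 : |2 * B + (12 * K ^ 2 + 12 * K + 2) * A2|
      < 2 * (2 / F ^ 3) + (12 * K ^ 2 + 12 * K + 2) * (1 / (K * F) ^ 3) := by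
    linarith
  have h3 : (2 * (2 / F ^ 3) + (12 * K ^ 2 + 12 * K + 2) * (1 / (K * F) ^ 3)) * (K * F) ^ 3
      = 4 * K ^ 3 + (12 * K ^ 2 + 12 * K + 2) := by
    field_simp; ring
  have h4 : 4 * K ^ 3 + (12 * K ^ 2 + 12 * K + 2) < 2 * D := by
    rw [hDdef]; nlinarith
  calc |2 * B + (12 * K ^ 2 + 12 * K + 2) * A2| * (K * F) ^ 3
      < (2 * (2 / F ^ 3) + (12 * K ^ 2 + 12 * K + 2) * (1 / (K * F) ^ 3)) * (K * F) ^ 3 :=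
        mul_lt_mul_of_pos_right h2 hKF
    _ = 4 * K ^ 3 + (12 * K ^ 2 + 12 * K + 2) := h3
    _ < 2 * D := h4

lemma abramowitz_joint (k : ℕ) (hk : 1 ≤ k) :
    |abramowitzA (2 * k)| ≤ 1 / (Nat.factorial (k - 1) : ℝ) ^ 3 ∧
    |abramowitzB (2 * k)| < 2 / (Nat.factorial (k - 1) : ℝ) ^ 3 := by
  induction k, hk using Nat.le_induction with
  | base =>
      constructor
      · show |abramowitzA 2| ≤ _
        rw [show abramowitzA 2 = -1 from rfl]
        norm_num [Nat.factorial]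
      · show |abramowitzB 2| < _
        have h1 := Real.one_half_lt_eulerMascheroniConstant
        have h2 := Real.eulerMascheroniConstant_lt_two_thirds
        rw [show abramowitzB 2 = 3 * (1 - Real.eulerMascheroniConstant) / 2 from rfl]
        rw [abs_lt]
        norm_num [Nat.factorial]
        constructor <;> nlinarith
  | succ n hn ih =>
      obtain ⟨j, rfl⟩ : ∃ j, n = j + 1 := ⟨n - 1, by omega⟩
      obtain ⟨hA, hB⟩ := ih
      rw [show 2 * (j + 1) = 2 * j + 2 from by ring] at hA hB
      rw [show j + 1 - 1 = j from rfl] at hA hB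
      rw [show 2 * (j + 1 + 1) = 2 * j + 4 from by ring,
          show j + 1 + 1 - 1 = j + 1 from rfl]
      have hfact : (Nat.factorial (j + 1) : ℝ) = ((j : ℝ) + 1) * (Nat.factorial j : ℝ) := by
        rw [Nat.factorial_succ]; push_cast; ring
      rw [hfact]
      exact abramowitz_step ((j : ℝ) + 1) (Nat.factorial j : ℝ) _ _ _ _
        (by push_cast; linarith [Nat.cast_nonneg (α := ℝ) j])
        (by positivity) hA hB (abramowitzA_rec j) (abramowitzB_rec j)

theorem abramowitzB_even_bound (k : ℕ) (hk : 1 ≤ k) :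
    |abramowitzB (2 * k)| < 2 / (Nat.factorial (k - 1) : ℝ) ^ 3 := by
  exact (abramowitz_joint k hk).2
end
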